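/- Let Ω ⊆ ℝ² be a bounded open convex set and f : Ω → ℝ positive. Assume the Monge–Ampère Dirichlet problem det[D²u] = f in Ω, u = 0 on ∂Ω, has at most one convex C² solution, and let u_I be such a solution. Suppose g₁, g₂ : Ω → ℝ are nonnegative functions and v₁, v₂ : Ω → ℝ are C² functions with Δvᵢ = 2√f + gᵢ in Ω, vᵢ = 0 on ∂Ω, and det[D²vᵢ] = f in Ω, for i = 1, 2. Then v₁ = v₂ = u_I and g₁ = g₂ = Δu_I − 2√f on Ω. -/

import Mathlib

/-! A `C²` function on `ℝ²` whose Hessian has positive trace and positive determinant has a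
positive definite Hessian, hence is convex. Each `vᵢ` has `Δvᵢ ≥ 2√f > 0` and `det D²vᵢ = f > 0`,
so it is a convex solution of the Monge–Ampère Dirichlet problem, and uniqueness gives `vᵢ = u_I`
on `Ω`. As `Ω` is open, the Hessians of `vᵢ` and `u_I` then agree on `Ω`, so
`gᵢ = Δvᵢ - 2√f = Δu_I - 2√f`. -/

open Real

/-- The Hessian matrix of `u : ℝ² → ℝ` at `x`. -/
noncomputable def Hess (u : EuclideanSpace ℝ (Fin 2) → ℝ)
    (x : EuclideanSpace ℝ (Fin 2)) : Matrix (Fin 2) (Fin 2) ℝ :=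
  Matrix.of fun i j =>
    fderiv ℝ (fun y => fderiv ℝ u y (EuclideanSpace.single j (1:ℝ))) x
      (EuclideanSpace.single i (1:ℝ))

/-- `u` is a convex `C²` solution of the Monge–Ampère Dirichlet problem
`det D²u = f` in `Ω`, `u = 0` on `∂Ω`. -/
def IsMASol (Ω : Set (EuclideanSpace ℝ (Fin 2)))
    (f u : EuclideanSpace ℝ (Fin 2) → ℝ) : Prop :=
  ContDiffOn ℝ 2 u Ω ∧ ConvexOn ℝ Ω u ∧
    (∀ x ∈ Ω, (Hess u x).det = f x) ∧ (∀ x ∈ frontier Ω, u x = 0)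

open Topology Matrix

local notation "ℝ²" => EuclideanSpace ℝ (Fin 2)

lemma Matrix.posDef_of_trace_pos_of_det_pos {A : Matrix (Fin 2) (Fin 2) ℝ} (hA : A.IsSymm)
    (htr : 0 < A.trace) (hdet : 0 < A.det) : A.PosDef := by
  rw [posDef_iff_dotProduct_mulVec]
  refine ⟨hA, fun v hv => ?_⟩
  have hsymm : A 1 0 = A 0 1 := by simpa using congrFun (congrFun hA 0) 1
  rw [trace_fin_two] at htr
  rw [det_fin_two, hsymm] at hdet
  have ha : 0 < A 0 0 := by nlinarith [sq_nonneg (A 0 1)]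
  have hsq : A 0 0 * (star v ⬝ᵥ (A *ᵥ v))
      = (A 0 0 * v 0 + A 0 1 * v 1) ^ 2 + (A 0 0 * A 1 1 - A 0 1 * A 0 1) * v 1 ^ 2 := by
    simp only [star_trivial, dotProduct, mulVec, Fin.sum_univ_two, hsymm]
    ring
  have hpos : 0 < A 0 0 * (star v ⬝ᵥ (A *ᵥ v)) := by
    rw [hsq]
    by_cases h1 : v 1 = 0
    · have h0 : v 0 ≠ 0 := fun h0 => hv (funext fun i => by fin_cases i <;> simp [h0, h1])
      simpa [h1] using sq_pos_of_ne_zero (mul_ne_zero ha.ne' h0)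
    · positivity
  exact pos_of_mul_pos_right hpos ha.le

lemma convexOn_of_convexOn_lineMap {E : Type*} [AddCommGroup E] [Module ℝ E] {s : Set E}
    {f : E → ℝ} (hs : Convex ℝ s)
    (h : ∀ x ∈ s, ∀ y ∈ s, ConvexOn ℝ (Set.Icc (0:ℝ) 1) (fun t => f (AffineMap.lineMap x y t))) :
    ConvexOn ℝ s f := by
  refine ⟨hs, fun x hx y hy a b ha hb hab => ?_⟩
  have := (h x hx y hy).2 (Set.left_mem_Icc.2 zero_le_one) (Set.right_mem_Icc.2 zero_le_one)
    ha hb hab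
  have hab' : a = 1 - b := by linarith
  simpa [AffineMap.lineMap_apply_module, hab'] using this

lemma convexOn_of_fderiv_fderiv_apply_self_nonneg {E : Type*} [NormedAddCommGroup E]
    [NormedSpace ℝ E] {Ω : Set E} {u : E → ℝ} (hΩo : IsOpen Ω) (hΩc : Convex ℝ Ω)
    (hu : DifferentiableOn ℝ u Ω) (hu' : DifferentiableOn ℝ (fderiv ℝ u) Ω)
    (h : ∀ x ∈ Ω, ∀ d, 0 ≤ fderiv ℝ (fderiv ℝ u) x d d) : ConvexOn ℝ Ω u := by
  refine convexOn_of_convexOn_lineMap hΩc fun x hx y hy => ?_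
  set L := AffineMap.lineMap (k := ℝ) x y
  have hLΩ : ∀ t ∈ Set.Icc (0:ℝ) 1, L t ∈ Ω := fun t ht => hΩc.lineMap_mem hx hy ht
  have hD1 : ∀ t ∈ Set.Icc (0:ℝ) 1,
      HasDerivAt (fun s => u (L s)) (fderiv ℝ u (L t) (y - x)) t := fun t ht =>
    ((hu.differentiableAt (hΩo.mem_nhds (hLΩ t ht))).hasFDerivAt).comp_hasDerivAt t
      AffineMap.hasDerivAt_lineMap
  have hD2 : ∀ t ∈ Set.Icc (0:ℝ) 1, HasDerivAt (fun s => fderiv ℝ u (L s) (y - x))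
      (fderiv ℝ (fderiv ℝ u) (L t) (y - x) (y - x)) t := fun t ht => by
    simpa using (((hu'.differentiableAt (hΩo.mem_nhds (hLΩ t ht))).hasFDerivAt).comp_hasDerivAt t
      AffineMap.hasDerivAt_lineMap).clm_apply (hasDerivAt_const t (y - x))
  refine convexOn_of_hasDerivWithinAt2_nonneg (convex_Icc 0 1)
    (fun t ht => (hD1 t ht).continuousAt.continuousWithinAt)
    (fun t ht => (hD1 t (interior_subset ht)).hasDerivWithinAt)
    (fun t ht => (hD2 t (interior_subset ht)).hasDerivWithinAt)
    (fun t ht => h _ (hLΩ t (interior_subset ht)) _)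

lemma hess_eq_toMatrix₂ {u : ℝ² → ℝ} {x : ℝ²} (hd : DifferentiableAt ℝ (fderiv ℝ u) x) :
    Hess u x = LinearMap.toMatrix₂ (EuclideanSpace.basisFun (Fin 2) ℝ).toBasis
      (EuclideanSpace.basisFun (Fin 2) ℝ).toBasis
      (fderiv ℝ (fderiv ℝ u) x).toLinearMap₁₂ := by
  ext i j
  rw [LinearMap.toMatrix₂_apply]
  simp [Hess, fderiv_clm_apply hd (differentiableAt_const _)]

lemma fderiv_fderiv_apply_self_nonneg {u : ℝ² → ℝ} {x : ℝ²} (hu : ContDiffAt ℝ 2 u x)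
    (htr : 0 < (Hess u x).trace) (hdet : 0 < (Hess u x).det) (d : ℝ²) :
    0 ≤ fderiv ℝ (fderiv ℝ u) x d d := by
  have hd : DifferentiableAt ℝ (fderiv ℝ u) x :=
    (hu.fderiv_right (m := 1) le_rfl).differentiableAt one_ne_zero
  have hsymm : (Hess u x).IsSymm := by
    ext i j
    simp [hess_eq_toMatrix₂ hd, hu.isSymmSndFDerivAt (by simp) _ _]
  set b := (EuclideanSpace.basisFun (Fin 2) ℝ).toBasis
  have hnonneg := (Matrix.posDef_of_trace_pos_of_det_pos hsymm htr hdet).posSemidef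
    |>.dotProduct_mulVec_nonneg (b.repr d)
  rw [hess_eq_toMatrix₂ hd, star_trivial] at hnonneg
  exact hnonneg.trans_eq
    (apply_eq_dotProduct_toMatrix₂_mulVec b b (fderiv ℝ (fderiv ℝ u) x).toLinearMap₁₂ d d).symm

lemma convexOn_of_hess_trace_pos_of_det_pos {Ω : Set ℝ²} {u : ℝ² → ℝ} (hΩo : IsOpen Ω)
    (hΩc : Convex ℝ Ω) (hu : ContDiffOn ℝ 2 u Ω) (htr : ∀ x ∈ Ω, 0 < (Hess u x).trace)
    (hdet : ∀ x ∈ Ω, 0 < (Hess u x).det) : ConvexOn ℝ Ω u :=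
  convexOn_of_fderiv_fderiv_apply_self_nonneg hΩo hΩc (hu.differentiableOn two_ne_zero)
    ((hu.fderiv_of_isOpen hΩo (m := 1) le_rfl).differentiableOn one_ne_zero)
    fun x hx => fderiv_fderiv_apply_self_nonneg (hu.contDiffAt (hΩo.mem_nhds hx))
      (htr x hx) (hdet x hx)

lemma isMASol_of_hess_trace_eq_two_sqrt_add {Ω : Set ℝ²} {f g v : ℝ² → ℝ} (hΩo : IsOpen Ω)
    (hΩc : Convex ℝ Ω) (hf : ∀ x ∈ Ω, 0 < f x) (hg : ∀ x ∈ Ω, 0 ≤ g x) (hvC : ContDiffOn ℝ 2 v Ω)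
    (hvΔ : ∀ x ∈ Ω, (Hess v x).trace = 2 * √(f x) + g x)
    (hvdet : ∀ x ∈ Ω, (Hess v x).det = f x) (hvbd : ∀ x ∈ frontier Ω, v x = 0) :
    IsMASol Ω f v := by
  refine ⟨hvC, convexOn_of_hess_trace_pos_of_det_pos hΩo hΩc hvC (fun x hx => ?_)
    (fun x hx => hvdet x hx ▸ hf x hx), hvdet, hvbd⟩
  rw [hvΔ x hx]
  have := sqrt_pos.2 (hf x hx)
  linarith [hg x hx]

lemma Filter.EventuallyEq.hess_eq {u v : ℝ² → ℝ} {x : ℝ²} (h : v =ᶠ[𝓝 x] u) :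
    Hess v x = Hess u x := by
  ext i j
  simp only [Hess, Matrix.of_apply]
  have hj : (fun y => fderiv ℝ v y (EuclideanSpace.single j (1:ℝ)))
      =ᶠ[𝓝 x] fun y => fderiv ℝ u y (EuclideanSpace.single j (1:ℝ)) :=
    (h.fderiv (𝕜 := ℝ)).mono fun y hy => by simp only [hy]
  rw [hj.fderiv_eq]

theorem poisson_reformulation_unique_general
    (Ω : Set (EuclideanSpace ℝ (Fin 2))) (hΩo : IsOpen Ω) (hΩc : Convex ℝ Ω)
    (f uI : EuclideanSpace ℝ (Fin 2) → ℝ)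
    (hf : ∀ x ∈ Ω, 0 < f x)
    (huniq : ∀ u v : EuclideanSpace ℝ (Fin 2) → ℝ,
      IsMASol Ω f u → IsMASol Ω f v → Set.EqOn u v Ω)
    (huI : IsMASol Ω f uI)
    (g₁ g₂ v₁ v₂ : EuclideanSpace ℝ (Fin 2) → ℝ)
    (hg₁ : ∀ x ∈ Ω, 0 ≤ g₁ x) (hg₂ : ∀ x ∈ Ω, 0 ≤ g₂ x)
    (hv₁C : ContDiffOn ℝ 2 v₁ Ω) (hv₂C : ContDiffOn ℝ 2 v₂ Ω)
    (hv₁Δ : ∀ x ∈ Ω, (Hess v₁ x).trace = 2 * Real.sqrt (f x) + g₁ x)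
    (hv₂Δ : ∀ x ∈ Ω, (Hess v₂ x).trace = 2 * Real.sqrt (f x) + g₂ x)
    (hv₁bd : ∀ x ∈ frontier Ω, v₁ x = 0) (hv₂bd : ∀ x ∈ frontier Ω, v₂ x = 0)
    (hv₁det : ∀ x ∈ Ω, (Hess v₁ x).det = f x)
    (hv₂det : ∀ x ∈ Ω, (Hess v₂ x).det = f x) :
    Set.EqOn v₁ uI Ω ∧ Set.EqOn v₂ uI Ω ∧
    (∀ x ∈ Ω, g₁ x = (Hess uI x).trace - 2 * Real.sqrt (f x)) ∧
    (∀ x ∈ Ω, g₂ x = (Hess uI x).trace - 2 * Real.sqrt (f x)) := by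
  have hv₁ := isMASol_of_hess_trace_eq_two_sqrt_add hΩo hΩc hf hg₁ hv₁C hv₁Δ hv₁det hv₁bd
  have hv₂ := isMASol_of_hess_trace_eq_two_sqrt_add hΩo hΩc hf hg₂ hv₂C hv₂Δ hv₂det hv₂bd
  have e₁ := huniq v₁ uI hv₁ huI
  have e₂ := huniq v₂ uI hv₂ huI
  refine ⟨e₁, e₂, fun x hx => ?_, fun x hx => ?_⟩
  · rw [← (e₁.eventuallyEq_of_mem (hΩo.mem_nhds hx)).hess_eq, hv₁Δ x hx]
    ring
  · rw [← (e₂.eventuallyEq_of_mem (hΩo.mem_nhds hx)).hess_eq, hv₂Δ x hx]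
    ring

/-- Uniqueness in Theorem 2.1: assuming the Monge–Ampère Dirichlet problem has at
most one convex `C²` solution `u_I`, if `v₁, v₂` are `C²` functions solving the
Poisson problems `Δvᵢ = 2√f + gᵢ` in `Ω`, `vᵢ = 0` on `∂Ω`, with nonnegative `gᵢ`
and `det D²vᵢ = f` in `Ω`, then `v₁ = v₂ = u_I` and `g₁ = g₂ = Δu_I − 2√f` on `Ω`. -/
theorem poisson_reformulation_unique
    (Ω : Set (EuclideanSpace ℝ (Fin 2))) (hΩo : IsOpen Ω) (hΩc : Convex ℝ Ω)
    (hΩb : Bornology.IsBounded Ω)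
    (f uI : EuclideanSpace ℝ (Fin 2) → ℝ)
    (hf : ∀ x ∈ Ω, 0 < f x)
    (huniq : ∀ u v : EuclideanSpace ℝ (Fin 2) → ℝ,
      IsMASol Ω f u → IsMASol Ω f v → Set.EqOn u v Ω)
    (huI : IsMASol Ω f uI)
    (g₁ g₂ v₁ v₂ : EuclideanSpace ℝ (Fin 2) → ℝ)
    (hg₁ : ∀ x ∈ Ω, 0 ≤ g₁ x) (hg₂ : ∀ x ∈ Ω, 0 ≤ g₂ x)
    (hv₁C : ContDiffOn ℝ 2 v₁ Ω) (hv₂C : ContDiffOn ℝ 2 v₂ Ω)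
    (hv₁Δ : ∀ x ∈ Ω, (Hess v₁ x).trace = 2 * Real.sqrt (f x) + g₁ x)
    (hv₂Δ : ∀ x ∈ Ω, (Hess v₂ x).trace = 2 * Real.sqrt (f x) + g₂ x)
    (hv₁bd : ∀ x ∈ frontier Ω, v₁ x = 0) (hv₂bd : ∀ x ∈ frontier Ω, v₂ x = 0)
    (hv₁det : ∀ x ∈ Ω, (Hess v₁ x).det = f x)
    (hv₂det : ∀ x ∈ Ω, (Hess v₂ x).det = f x) :
    Set.EqOn v₁ uI Ω ∧ Set.EqOn v₂ uI Ω ∧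
    (∀ x ∈ Ω, g₁ x = (Hess uI x).trace - 2 * Real.sqrt (f x)) ∧
    (∀ x ∈ Ω, g₂ x = (Hess uI x).trace - 2 * Real.sqrt (f x)) :=
  poisson_reformulation_unique_general Ω hΩo hΩc f uI hf huniq huI g₁ g₂ v₁ v₂ hg₁ hg₂ hv₁C hv₂C
    hv₁Δ hv₂Δ hv₁bd hv₂bd hv₁det hv₂det
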